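/- (Freehand proposition.) Let p be the total spherical perspective map and P ∈ S² \ {F, B}. Let u = p(P)/‖p(P)‖ and let P_B = π·(−u) be the point where the ray from p(P) through the origin meets the blowup circle of radius π. Then ‖p(−P) − P_B‖ = ‖p(P)‖ and ‖p(−P)‖ = ‖p(P) − π·u‖ (i.e., the distance from p(−P) to the center equals the distance from p(P) to the diametrically opposite blowup point π·u). -/

import Mathlib

open scoped RealInnerProductSpace

noncomputable section

abbrev E3 := EuclideanSpace ℝ (Fin 3)
abbrev E2 := EuclideanSpace ℝ (Fin 2)

/-- The vector (a, b) in euclidean ℝ². -/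
def vec2 (a b : ℝ) : E2 := (WithLp.equiv 2 (Fin 2 → ℝ)).symm ![a, b]

/-- The vector (a, b, c) in euclidean ℝ³. -/
def vec3 (a b c : ℝ) : E3 := (WithLp.equiv 2 (Fin 3 → ℝ)).symm ![a, b, c]

/-- The total spherical perspective map: p(x,y,z) = arccos(y/‖P‖) · (x,z)/√(x²+z²). -/
def persp (P : E3) : E2 :=
  (Real.arccos (P 1 / ‖P‖) / Real.sqrt ((P 0) ^ 2 + (P 2) ^ 2)) • vec2 (P 0) (P 2)

/-- The front point F = (0,1,0). -/
def Fpt : E3 := vec3 0 1 0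

/-- The back point B = (0,-1,0). -/
def Bpt : E3 := vec3 0 (-1) 0

/-! Writing `θ = arccos y` and `u` for the unit vector along `(x, z)`, the map is `p(P) = θ • u`.
Since `arccos (-y) = π - θ` and `-P` has direction `-u`, we get `p(-P) = -(π - θ) • u = p(P) - π • u`,
and with `u = p(P) / ‖p(P)‖` both identities are immediate. -/

open Real

def perspDir (P : E3) : E2 := (√(P 0 ^ 2 + P 2 ^ 2))⁻¹ • vec2 (P 0) (P 2)

theorem persp_eq_arccos_smul_perspDir (P : E3) :
    persp P = arccos (P 1 / ‖P‖) • perspDir P := by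
  rw [persp, perspDir, div_eq_mul_inv, mul_smul]

theorem perspDir_neg (P : E3) : perspDir (-P) = -perspDir P := by
  have : vec2 (-P 0) (-P 2) = -vec2 (P 0) (P 2) := by
    ext i; fin_cases i <;> simp [vec2]
  simp only [perspDir, PiLp.neg_apply, neg_sq, this, smul_neg]

theorem norm_vec2 (a b : ℝ) : ‖vec2 a b‖ = √(a ^ 2 + b ^ 2) := by
  simp [vec2, EuclideanSpace.norm_eq, Fin.sum_univ_two]

theorem norm_perspDir {P : E3} (h : P 0 ^ 2 + P 2 ^ 2 ≠ 0) : ‖perspDir P‖ = 1 := by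
  have : 0 < √(P 0 ^ 2 + P 2 ^ 2) := Real.sqrt_pos.mpr (by positivity)
  rw [perspDir, norm_smul, norm_vec2, norm_inv, Real.norm_of_nonneg this.le, inv_mul_cancel₀ this.ne']

theorem arccos_div_norm_pos {P : E3} (h : P 0 ^ 2 + P 2 ^ 2 ≠ 0) :
    0 < arccos (P 1 / ‖P‖) := by
  have hsq : P 1 ^ 2 < ‖P‖ ^ 2 := by
    have : 0 < P 0 ^ 2 + P 2 ^ 2 := (by positivity : (0 : ℝ) ≤ _).lt_of_ne' h
    simp only [EuclideanSpace.norm_sq_eq, Fin.sum_univ_three, Real.norm_eq_abs, sq_abs]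
    linarith
  have habs : |P 1| < ‖P‖ := abs_lt_of_sq_lt_sq hsq (norm_nonneg P)
  exact arccos_pos.mpr ((div_lt_one ((abs_nonneg _).trans_lt habs)).mpr ((le_abs_self _).trans_lt habs))

theorem persp_neg_eq_smul_perspDir (P : E3) :
    persp (-P) = -((π - arccos (P 1 / ‖P‖)) • perspDir P) := by
  rw [persp_eq_arccos_smul_perspDir, perspDir_neg, PiLp.neg_apply, norm_neg, neg_div, arccos_neg,
    smul_neg]

theorem persp_neg (P : E3) : persp (-P) = persp P - π • (‖persp P‖⁻¹ • persp P) := by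
  rw [persp_neg_eq_smul_perspDir, persp_eq_arccos_smul_perspDir]
  by_cases h : P 0 ^ 2 + P 2 ^ 2 = 0
  -- on the `y`-axis `persp` divides by `√0 = 0`, so both sides vanish
  · have : perspDir P = 0 := by simp only [perspDir, h, Real.sqrt_zero, inv_zero, zero_smul]
    simp only [this, smul_zero, neg_zero, sub_zero]
  · have hθ : 0 < arccos (P 1 / ‖P‖) := arccos_div_norm_pos h
    rw [norm_smul, norm_perspDir h, mul_one, Real.norm_of_nonneg hθ.le, inv_smul_smul₀ hθ.ne']
    module

theorem stmt10_general (P : E3) :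
    ‖persp (-P) - Real.pi • (-(‖persp P‖⁻¹ • persp P))‖ = ‖persp P‖ ∧
    ‖persp (-P)‖ = ‖persp P - Real.pi • (‖persp P‖⁻¹ • persp P)‖ := by
  rw [persp_neg, smul_neg, sub_neg_eq_add, sub_add_cancel]
  exact ⟨rfl, rfl⟩

/-- freehand rule: with u = p(P)/‖p(P)‖ and P_B = -π·u the blowup point on the
ray from p(P) through the origin, ‖p(-P) - P_B‖ = ‖p(P)‖ and ‖p(-P)‖ = ‖p(P) - π·u‖. -/
theorem stmt10 (P : E3) (hP : P ∈ Metric.sphere (0 : E3) 1) (hF : P ≠ Fpt) (hB : P ≠ Bpt) :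
    ‖persp (-P) - Real.pi • (-(‖persp P‖⁻¹ • persp P))‖ = ‖persp P‖ ∧
    ‖persp (-P)‖ = ‖persp P - Real.pi • (‖persp P‖⁻¹ • persp P)‖ :=
  stmt10_general P
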